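/- Every s-bijective or u-bijective factor map π : (Y, ψ) → (X, φ) between Smale spaces is finite-to-one with a uniform bound: there exists a positive integer N such that #π^{-1}(x) ≤ N for every x ∈ X. -/

import Mathlib

open Filter Topology Set

/-- A Smale space structure on a compact metric space. -/
structure SmaleSpace (X : Type) [MetricSpace X] : Type where
  compact : CompactSpace X
  phi : X ≃ₜ X
  eps : ℝ
  eps_pos : 0 < eps
  lam : ℝ
  lam_pos : 0 < lam
  lam_lt_one : lam < 1
  bracket : X → X → X
  bracket_cont : ContinuousOn (fun p : X × X => bracket p.1 p.2) {p | dist p.1 p.2 ≤ eps}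
  bracket_self : ∀ x, bracket x x = x
  bracket_eq₁ : ∀ x y z, dist x y ≤ eps → dist y z ≤ eps → dist x z ≤ eps →
    bracket x (bracket y z) = bracket x z
  bracket_eq₂ : ∀ x y z, dist x y ≤ eps → dist y z ≤ eps → dist x z ≤ eps →
    bracket (bracket x y) z = bracket x z
  bracket_phi : ∀ x y, dist x y ≤ eps → dist (phi x) (phi y) ≤ eps →
    phi (bracket x y) = bracket (phi x) (phi y)
  contract_s : ∀ x y z, dist x y ≤ eps → bracket x y = y → dist x z ≤ eps → bracket x z = z →
    dist (phi y) (phi z) ≤ lam * dist y z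
  contract_u : ∀ x y z, dist x y ≤ eps → bracket y x = y → dist x z ≤ eps → bracket z x = z →
    dist (phi.symm y) (phi.symm z) ≤ lam * dist y z

namespace SmaleSpace

variable {X : Type} [MetricSpace X]

/-- The local stable set `X^s(x, ε)`. -/
def locStable (S : SmaleSpace X) (x : X) (ε : ℝ) : Set X :=
  {y | dist x y ≤ ε ∧ S.bracket x y = y}

/-- The local unstable set `X^u(x, ε)`. -/
def locUnstable (S : SmaleSpace X) (x : X) (ε : ℝ) : Set X :=
  {y | dist x y ≤ ε ∧ S.bracket y x = y}

end SmaleSpace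

/-- Stable equivalence: the forward orbits are asymptotic. -/
def StableEquiv {X : Type} [MetricSpace X] (φ : X → X) (x y : X) : Prop :=
  Tendsto (fun n : ℕ => dist (φ^[n] x) (φ^[n] y)) atTop (𝓝 0)

/-- Unstable equivalence: the backward orbits are asymptotic. -/
def UnstableEquiv {X : Type} [MetricSpace X] (φ : X ≃ₜ X) (x y : X) : Prop :=
  Tendsto (fun n : ℕ => dist ((φ.symm : X → X)^[n] x) ((φ.symm : X → X)^[n] y)) atTop (𝓝 0)

/-- A point-free formulation of non-wandering: every point is non-wandering. -/
def NonWandering {X : Type} [TopologicalSpace X] (φ : X → X) : Prop :=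
  ∀ x : X, ∀ U ∈ 𝓝 x, ∃ n : ℕ, 1 ≤ n ∧ (φ^[n] '' U ∩ U).Nonempty

/-- A factor map between topological dynamical systems. -/
structure IsFactorMap {Y X : Type} [TopologicalSpace Y] [TopologicalSpace X]
    (ψ : Y ≃ₜ Y) (φ : X ≃ₜ X) (π : Y → X) : Prop where
  continuous : Continuous π
  surjective : Function.Surjective π
  semiconj : ∀ y, π (ψ y) = φ (π y)

/-- An `s`-resolving factor map: injective on stable equivalence classes. -/
structure IsSResolving {Y X : Type} [MetricSpace Y] [MetricSpace X]
    (ψ : Y ≃ₜ Y) (φ : X ≃ₜ X) (π : Y → X) extends IsFactorMap ψ φ π : Prop where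
  inj : ∀ y : Y, Set.InjOn π {y' | StableEquiv (⇑ψ) y y'}

/-- A `u`-resolving factor map: injective on unstable equivalence classes. -/
structure IsUResolving {Y X : Type} [MetricSpace Y] [MetricSpace X]
    (ψ : Y ≃ₜ Y) (φ : X ≃ₜ X) (π : Y → X) extends IsFactorMap ψ φ π : Prop where
  inj : ∀ y : Y, Set.InjOn π {y' | UnstableEquiv ψ y y'}

/-- An `s`-bijective factor map: bijective from each stable class onto that of the image. -/
structure IsSBij {Y X : Type} [MetricSpace Y] [MetricSpace X]
    (ψ : Y ≃ₜ Y) (φ : X ≃ₜ X) (π : Y → X) extends IsFactorMap ψ φ π : Prop where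
  bij : ∀ y : Y, Set.BijOn π {y' | StableEquiv (⇑ψ) y y'} {x | StableEquiv (⇑φ) (π y) x}

/-- A `u`-bijective factor map: bijective from each unstable class onto that of the image. -/
structure IsUBij {Y X : Type} [MetricSpace Y] [MetricSpace X]
    (ψ : Y ≃ₜ Y) (φ : X ≃ₜ X) (π : Y → X) extends IsFactorMap ψ φ π : Prop where
  bij : ∀ y : Y, Set.BijOn π {y' | UnstableEquiv ψ y y'} {x | UnstableEquiv φ (π y) x}

/-!
A Smale space is expansive. Hence if `π u = π v` with `u`, `v` close, the point `z = [u, v]`,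
which is stably equivalent to `u` and unstably equivalent to `v`, has an image whose orbit
shadows that of `π u` in both time directions, so `π z = π u`; `s`-resolvingness gives `z = u`,
i.e. `u` lies on the local unstable set of `v`. Two points of a fibre that are `δ`-close at time
`n` were therefore `λⁿ δ`-close at time `0`. Pushing a finite piece of a fibre far enough forward
thus makes it `δ`-separated without changing its size, and by compactness `δ`-separated sets
have uniformly bounded cardinality. The `u`-bijective case is the `s`-bijective one for the
time-reversed Smale spaces.
-/

lemma Set.encard_le_of_forall_finite_subset {α : Type*} {s : Set α} {k : ℕ}
    (h : ∀ t ⊆ s, t.Finite → t.encard ≤ k) : s.encard ≤ k := by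
  by_contra! hlt
  obtain ⟨t, hts, ht⟩ := exists_subset_encard_eq (Order.add_one_le_of_lt hlt)
  have hle := h t hts (finite_of_encard_eq_coe (k := k + 1) (by rw [ht]; rfl))
  rw [ht] at hle
  exact absurd hle (by norm_cast; omega)

lemma Metric.exists_encard_le_of_isSeparated {X : Type*} [PseudoMetricSpace X] [CompactSpace X]
    {ε : NNReal} (hε : ε ≠ 0) : ∃ N : ℕ, ∀ s : Set X, IsSeparated ε s → s.encard ≤ N := by
  obtain ⟨C, -, hCfin, hC⟩ := exists_finite_isCover_of_isCompact (ε := ε / 2) (by simpa using hε)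
    (isCompact_univ (X := X))
  refine ⟨C.ncard, fun s hs => ?_⟩
  calc s.encard ≤ packingNumber ε univ := hs.encard_le_packingNumber (subset_univ s)
    _ = packingNumber (2 * (ε / 2)) univ := by rw [mul_div_cancel₀ _ two_ne_zero]
    _ ≤ externalCoveringNumber (ε / 2) univ := packingNumber_two_mul_le_externalCoveringNumber _ _
    _ ≤ C.encard := hC.externalCoveringNumber_le_encard
    _ = C.ncard := hCfin.cast_ncard_eq.symm

namespace SmaleSpace

variable {X : Type} [MetricSpace X] (S : SmaleSpace X)

lemma lam_pow_mul_le {r : ℝ} (hr : 0 ≤ r) (n : ℕ) : S.lam ^ n * r ≤ r :=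
  mul_le_of_le_one_left hr (pow_le_one₀ S.lam_pos.le S.lam_lt_one.le)

lemma tendsto_lam_pow_mul (C : ℝ) : Tendsto (fun n : ℕ => S.lam ^ n * C) atTop (𝓝 0) := by
  simpa using (tendsto_pow_atTop_nhds_zero_of_lt_one S.lam_pos.le S.lam_lt_one).mul_const C

/-- The time reversal of a Smale space: stable and unstable sets trade places. -/
def flip : SmaleSpace X where
  compact := S.compact
  phi := S.phi.symm
  eps := S.eps
  eps_pos := S.eps_pos
  lam := S.lam
  lam_pos := S.lam_pos
  lam_lt_one := S.lam_lt_one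
  bracket x y := S.bracket y x
  bracket_cont := by
    refine S.bracket_cont.comp continuous_swap.continuousOn fun p hp => ?_
    simpa [dist_comm] using hp
  bracket_self := S.bracket_self
  bracket_eq₁ x y z hxy hyz hxz :=
    S.bracket_eq₂ z y x (by rwa [dist_comm]) (by rwa [dist_comm]) (by rwa [dist_comm])
  bracket_eq₂ x y z hxy hyz hxz :=
    S.bracket_eq₁ z y x (by rwa [dist_comm]) (by rwa [dist_comm]) (by rwa [dist_comm])
  bracket_phi x y hxy hxy' := by
    apply S.phi.injective
    rw [S.bracket_phi _ _ (by rwa [dist_comm]) (by simpa [dist_comm] using hxy)]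
    simp
  contract_s := S.contract_u
  contract_u := S.contract_s

lemma phi_mem_locStable {x y : X} {r : ℝ} (hy : y ∈ S.locStable x r) (hr : r ≤ S.eps) :
    S.phi y ∈ S.locStable (S.phi x) (S.lam * r) := by
  obtain ⟨hxy, hbr⟩ := hy
  have hcontr : dist (S.phi x) (S.phi y) ≤ S.lam * r :=
    (S.contract_s x x y (by simp [S.eps_pos.le]) (S.bracket_self x) (hxy.trans hr) hbr).trans
      (mul_le_mul_of_nonneg_left hxy S.lam_pos.le)
  have hlr : S.lam * r ≤ r :=
    mul_le_of_le_one_left (dist_nonneg.trans hxy) S.lam_lt_one.le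
  refine ⟨hcontr, ?_⟩
  rw [← S.bracket_phi x y (hxy.trans hr) (hcontr.trans (hlr.trans hr)), hbr]

lemma iterate_mem_locStable {x y : X} {r : ℝ} (hy : y ∈ S.locStable x r) (hr : r ≤ S.eps)
    (n : ℕ) : (⇑S.phi)^[n] y ∈ S.locStable ((⇑S.phi)^[n] x) (S.lam ^ n * r) := by
  induction n with
  | zero => simpa using hy
  | succ n ih =>
    rw [Function.iterate_succ_apply', Function.iterate_succ_apply', pow_succ', mul_assoc]
    exact S.phi_mem_locStable ih ((S.lam_pow_mul_le (dist_nonneg.trans hy.1) n).trans hr)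

lemma stableEquiv_of_mem_locStable {x y : X} {r : ℝ} (hy : y ∈ S.locStable x r)
    (hr : r ≤ S.eps) : StableEquiv S.phi x y :=
  squeeze_zero (fun _ => dist_nonneg) (fun n => (S.iterate_mem_locStable hy hr n).1)
    (S.tendsto_lam_pow_mul r)

lemma iterate_symm_mem_locUnstable {x y : X} {r : ℝ} (hy : y ∈ S.locUnstable x r)
    (hr : r ≤ S.eps) (n : ℕ) :
    (⇑S.phi.symm)^[n] y ∈ S.locUnstable ((⇑S.phi.symm)^[n] x) (S.lam ^ n * r) :=
  S.flip.iterate_mem_locStable hy hr n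

lemma dist_le_of_iterate_mem_locUnstable {x y : X} {r : ℝ} {n : ℕ}
    (hy : (⇑S.phi)^[n] y ∈ S.locUnstable ((⇑S.phi)^[n] x) r) (hr : r ≤ S.eps) :
    dist x y ≤ S.lam ^ n * r := by
  have h := (S.iterate_symm_mem_locUnstable hy hr n).1
  have hinv : Function.LeftInverse (⇑S.phi.symm)^[n] (⇑S.phi)^[n] :=
    Function.LeftInverse.iterate S.phi.symm_apply_apply n
  rwa [hinv, hinv] at h

lemma exists_dist_bracket_lt {η : ℝ} (hη : 0 < η) :
    ∃ δ > 0, δ ≤ S.eps ∧ ∀ x y, dist x y ≤ δ →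
      dist x (S.bracket x y) < η ∧ dist y (S.bracket x y) < η := by
  have := S.compact
  have hK : IsCompact {p : X × X | dist p.1 p.2 ≤ S.eps} :=
    (isClosed_le (by fun_prop) continuous_const).isCompact
  obtain ⟨δ, hδ, hunif⟩ := Metric.uniformContinuousOn_iff.mp
    (hK.uniformContinuousOn_of_continuous S.bracket_cont) η hη
  refine ⟨min (δ / 2) S.eps, lt_min (half_pos hδ) S.eps_pos, min_le_right _ _, fun x y hxy => ?_⟩
  have hxy_eps : dist x y ≤ S.eps := hxy.trans (min_le_right _ _)
  have hxy_δ : dist x y < δ := hxy.trans_lt ((min_le_left _ _).trans_lt (half_lt_self hδ))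
  have hdiag : ∀ z : X, (z, z) ∈ {p : X × X | dist p.1 p.2 ≤ S.eps} := fun z => by
    simp [S.eps_pos.le]
  constructor
  · have h := hunif (x, x) (hdiag x) (x, y) hxy_eps (by simpa [Prod.dist_eq] using hxy_δ)
    simpa [S.bracket_self] using h
  · have h := hunif (y, y) (hdiag y) (x, y) hxy_eps
      (by simpa [Prod.dist_eq, dist_comm] using hxy_δ)
    simpa [S.bracket_self] using h

lemma iterate_bracket {x y : X} (h : ∀ k : ℕ, dist ((⇑S.phi)^[k] x) ((⇑S.phi)^[k] y) ≤ S.eps)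
    (n : ℕ) : (⇑S.phi)^[n] (S.bracket x y) = S.bracket ((⇑S.phi)^[n] x) ((⇑S.phi)^[n] y) := by
  induction n with
  | zero => rfl
  | succ n ih =>
    have h' := h (n + 1)
    rw [Function.iterate_succ_apply', Function.iterate_succ_apply'] at h'
    rw [Function.iterate_succ_apply', Function.iterate_succ_apply', Function.iterate_succ_apply',
      ih, S.bracket_phi _ _ (h n) h']

/-- If the forward orbits of `x` and `y` stay close, then `[x, y]` lies on the local unstable
set of `y` at every time, so backward contraction forces `[x, y] = y`. -/
lemma exists_bracket_eq_right_of_forall_dist_iterate_le :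
    ∃ ε > 0, ∀ x y, (∀ n : ℕ, dist ((⇑S.phi)^[n] x) ((⇑S.phi)^[n] y) ≤ ε) →
      S.bracket x y = y := by
  obtain ⟨δ, hδ, hδ_eps, hbracket⟩ := S.exists_dist_bracket_lt S.eps_pos
  refine ⟨δ, hδ, fun x y hclose => ?_⟩
  have hclose_eps n := (hclose n).trans hδ_eps
  have hmem : ∀ n : ℕ, (⇑S.phi)^[n] (S.bracket x y) ∈
      S.locUnstable ((⇑S.phi)^[n] y) S.eps := fun n => by
    rw [S.iterate_bracket hclose_eps n]
    exact ⟨(hbracket _ _ (hclose n)).2.le,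
      S.bracket_eq₂ _ _ _ (hclose_eps n) (by simp [S.eps_pos.le]) (hclose_eps n)⟩
  have hdist n : dist y (S.bracket x y) ≤ S.lam ^ n * S.eps :=
    S.dist_le_of_iterate_mem_locUnstable (hmem n) le_rfl
  exact (dist_le_zero.mp (ge_of_tendsto (S.tendsto_lam_pow_mul _) (.of_forall hdist))).symm

lemma expansive :
    ∃ ε > 0, ∀ x y, (∀ n : ℕ, dist ((⇑S.phi)^[n] x) ((⇑S.phi)^[n] y) ≤ ε) →
      (∀ n : ℕ, dist ((⇑S.phi.symm)^[n] x) ((⇑S.phi.symm)^[n] y) ≤ ε) → x = y := by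
  obtain ⟨ε₁, hε₁, hfwd⟩ := S.exists_bracket_eq_right_of_forall_dist_iterate_le
  obtain ⟨ε₂, hε₂, hbwd⟩ := S.flip.exists_bracket_eq_right_of_forall_dist_iterate_le
  refine ⟨min ε₁ ε₂, lt_min hε₁ hε₂, fun x y hf hb => ?_⟩
  have hx : S.bracket x y = x := hbwd y x fun n => by
    rw [dist_comm]
    exact (hb n).trans (min_le_right _ _)
  rw [← hx, hfwd x y fun n => (hf n).trans (min_le_left _ _)]

end SmaleSpace

lemma IsFactorMap.symm {Y X : Type} [TopologicalSpace Y] [TopologicalSpace X]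
    {ψ : Y ≃ₜ Y} {φ : X ≃ₜ X} {π : Y → X} (h : IsFactorMap ψ φ π) :
    IsFactorMap ψ.symm φ.symm π where
  continuous := h.continuous
  surjective := h.surjective
  semiconj := Function.Semiconj.inverses_right h.semiconj ψ.apply_symm_apply φ.symm_apply_apply

section Resolving

variable {Y X : Type} [MetricSpace Y] [MetricSpace X] {ψ : Y ≃ₜ Y} {φ : X ≃ₜ X} {π : Y → X}

lemma IsSBij.toIsSResolving (h : IsSBij ψ φ π) : IsSResolving ψ φ π :=
  ⟨h.toIsFactorMap, fun y => (h.bij y).injOn⟩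

lemma IsUBij.toIsUResolving (h : IsUBij ψ φ π) : IsUResolving ψ φ π :=
  ⟨h.toIsFactorMap, fun y => (h.bij y).injOn⟩

lemma IsUResolving.symm (h : IsUResolving ψ φ π) : IsSResolving ψ.symm φ.symm π :=
  ⟨h.toIsFactorMap.symm, h.inj⟩

end Resolving

namespace IsSResolving

variable {Y X : Type} [MetricSpace Y] [MetricSpace X] {S : SmaleSpace Y} {T : SmaleSpace X}
  {π : Y → X}

lemma exists_bracket_eq_left_of_dist_le (h : IsSResolving S.phi T.phi π) :
    ∃ δ > 0, δ ≤ S.eps ∧ ∀ u v, π u = π v → dist u v ≤ δ → S.bracket u v = u := by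
  have := S.compact
  obtain ⟨ε, hε, hexp⟩ := T.expansive
  obtain ⟨δπ, hδπ, hπ⟩ := Metric.uniformContinuous_iff.mp
    (CompactSpace.uniformContinuous_of_continuous h.continuous) ε hε
  obtain ⟨δ, hδ, hδ_eps, hbracket⟩ := S.exists_dist_bracket_lt (lt_min hδπ S.eps_pos)
  refine ⟨δ, hδ, hδ_eps, fun u v huv hdist => ?_⟩
  set z := S.bracket u v
  obtain ⟨huz, hvz⟩ := hbracket u v hdist
  have hdist_eps := hdist.trans hδ_eps
  have hz_s : z ∈ S.locStable u (dist u z) :=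
    ⟨le_rfl, S.bracket_eq₁ u u v (by simp [S.eps_pos.le]) hdist_eps hdist_eps⟩
  have hz_u : z ∈ S.locUnstable v (dist v z) :=
    ⟨le_rfl, S.bracket_eq₂ u v v hdist_eps (by simp [S.eps_pos.le]) hdist_eps⟩
  have hsemi : Function.Semiconj π S.phi T.phi := h.semiconj
  have hsemi_symm : Function.Semiconj π S.phi.symm T.phi.symm := h.toIsFactorMap.symm.semiconj
  have hπz : π u = π z := by
    refine hexp _ _ (fun n => ?_) (fun n => ?_)
    · rw [← hsemi.iterate_right n u, ← hsemi.iterate_right n z]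
      refine (hπ ?_).le
      calc dist ((⇑S.phi)^[n] u) ((⇑S.phi)^[n] z) ≤ S.lam ^ n * dist u z :=
            (S.iterate_mem_locStable hz_s (huz.le.trans (min_le_right _ _)) n).1
        _ ≤ dist u z := S.lam_pow_mul_le dist_nonneg n
        _ < δπ := huz.trans_le (min_le_left _ _)
    · rw [huv, ← hsemi_symm.iterate_right n v, ← hsemi_symm.iterate_right n z]
      refine (hπ ?_).le
      calc dist ((⇑S.phi.symm)^[n] v) ((⇑S.phi.symm)^[n] z) ≤ S.lam ^ n * dist v z :=
            (S.iterate_symm_mem_locUnstable hz_u (hvz.le.trans (min_le_right _ _)) n).1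
        _ ≤ dist v z := S.lam_pow_mul_le dist_nonneg n
        _ < δπ := hvz.trans_le (min_le_left _ _)
  have hstable : StableEquiv S.phi u z :=
    S.stableEquiv_of_mem_locStable hz_s (huz.le.trans (min_le_right _ _))
  exact (h.inj u (by simp [StableEquiv]) hstable hπz).symm

lemma exists_encard_fiber_le (h : IsSResolving S.phi T.phi π) :
    ∃ N : ℕ, ∀ x, (π ⁻¹' {x}).encard ≤ N := by
  have := S.compact
  obtain ⟨δ, hδ, hδ_eps, hbracket⟩ := h.exists_bracket_eq_left_of_dist_le
  obtain ⟨N, hN⟩ := Metric.exists_encard_le_of_isSeparated (X := Y) (ε := δ.toNNReal)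
    (by simpa using hδ)
  refine ⟨N, fun x => Set.encard_le_of_forall_finite_subset fun G hG hGfin => ?_⟩
  have hev : ∀ᶠ n in atTop, ∀ a ∈ G, ∀ b ∈ G, a ≠ b → S.lam ^ n * δ < dist a b := by
    simp only [eventually_all_finite hGfin]
    intro a _ b _
    by_cases hab : a = b
    · simp [hab]
    · filter_upwards [(S.tendsto_lam_pow_mul δ).eventually (gt_mem_nhds (dist_pos.2 hab))]
        with n hn using fun _ => hn
  obtain ⟨n, hn⟩ := hev.exists
  have hsep : Metric.IsSeparated δ.toNNReal ((⇑S.phi)^[n] '' G) := by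
    rintro _ ⟨a, ha, rfl⟩ _ ⟨b, hb, rfl⟩ hne
    have hab : a ≠ b := fun hab => hne (hab ▸ rfl)
    show ENNReal.ofReal δ < edist _ _
    rw [edist_dist, ENNReal.ofReal_lt_ofReal_iff (dist_pos.2 hne)]
    by_contra! hle
    have hfiber : π ((⇑S.phi)^[n] a) = π ((⇑S.phi)^[n] b) := by
      rw [(Function.Semiconj.iterate_right h.semiconj n) a,
        (Function.Semiconj.iterate_right h.semiconj n) b, hG ha, hG hb]
    have hmem : (⇑S.phi)^[n] a ∈ S.locUnstable ((⇑S.phi)^[n] b) δ :=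
      ⟨by rwa [dist_comm], hbracket _ _ hfiber hle⟩
    have := S.dist_le_of_iterate_mem_locUnstable hmem hδ_eps
    rw [dist_comm] at this
    exact (hn a ha b hb hab).not_ge this
  rw [← (S.phi.injective.iterate n).encard_image G]
  exact hN _ hsep

end IsSResolving

/-- Every `s`-bijective or `u`-bijective factor map between Smale spaces is
finite-to-one, with a uniform bound on the cardinality of the fibres. -/
theorem sbij_or_ubij_is_uniformly_finite_to_one {Y X : Type} [MetricSpace Y] [MetricSpace X]
    (S : SmaleSpace Y) (T : SmaleSpace X) (π : Y → X)
    (hπ : IsSBij S.phi T.phi π ∨ IsUBij S.phi T.phi π) :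
    ∃ N : ℕ, 1 ≤ N ∧ ∀ x : X, (π ⁻¹' {x}).Finite ∧ Nat.card (π ⁻¹' {x}) ≤ N := by
  obtain ⟨N, hN⟩ : ∃ N : ℕ, ∀ x, (π ⁻¹' {x}).encard ≤ N := by
    rcases hπ with h | h
    · exact h.toIsSResolving.exists_encard_fiber_le
    · exact h.toIsUResolving.symm.exists_encard_fiber_le (S := S.flip) (T := T.flip)
  refine ⟨N + 1, Nat.le_add_left 1 N, fun x => ?_⟩
  obtain ⟨hfin, hcard⟩ := Set.encard_le_coe_iff_finite_ncard_le.mp (hN x)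
  exact ⟨hfin, (Nat.card_coe_set_eq _).trans_le (hcard.trans N.le_succ)⟩
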